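/- Let g ∈ GL_d(𝕂) (𝕂 = ℝ or ℂ) with singular values σ₁(g) ≥ … ≥ σ_d(g). Then for any two unit vectors v₁, v₂ ∈ 𝕂^d, the Fubini–Study distance satisfies d_ℙ([gv₁], [gv₂]) ≥ (2/π) · (σ_d(g)σ_{d−1}(g)/σ₁(g)²) · d_ℙ([v₁], [v₂]). -/

import Mathlib

open scoped RealInnerProductSpace

/-- The Fubini–Study distance on `ℙ(𝕂^d)`, computed on representative vectors. -/
noncomputable def dProj {𝕂 : Type*} [RCLike 𝕂] {d : ℕ} (v w : EuclideanSpace 𝕂 (Fin d)) : ℝ :=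
  Real.arccos (‖(inner 𝕂 v w : 𝕂)‖ / (‖v‖ * ‖w‖))

/-- `σ` is the non-increasing list of singular values of `g`, i.e. the square roots of the
eigenvalues of `g gᴴ`. -/
def IsSingValues {𝕂 : Type*} [RCLike 𝕂] {d : ℕ} (g : Matrix (Fin d) (Fin d) 𝕂)
    (σ : Fin d → ℝ) : Prop :=
  Antitone σ ∧ ∃ e : Equiv.Perm (Fin d), ∀ i,
    σ i = Real.sqrt ((Matrix.isHermitian_mul_conjTranspose_self g).eigenvalues (e i))

/-!
Let `x, y` be the coordinates of `g v₁, g v₂` in an orthonormal eigenbasis of `g gᴴ`, with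
eigenvalues `λᵢ = σᵢ²`. Then `⟪g v₁, g v₂⟫ = ∑ x̄ᵢ yᵢ` while `⟪v₁, v₂⟫ = ∑ λᵢ⁻¹ x̄ᵢ yᵢ`. By
Lagrange's identity the Gram determinant `G(u, w) = ‖u‖²‖w‖² - |⟪u, w⟫|²` of a diagonal form with
weights `μ` is `½ ∑ᵢⱼ μᵢ μⱼ |xᵢ yⱼ - xⱼ yᵢ|²`, in which only products `μᵢ μⱼ` with `i ≠ j` occur;
hence `(σ_d σ_{d-1})² · G(v₁, v₂) ≤ G(g v₁, g v₂)`. Since `sin d_ℙ(u, w) = √G(u, w) / (‖u‖ ‖w‖)`,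
`‖g vₖ‖ ≤ σ₁` and `(2/π) θ ≤ sin θ ≤ θ` on `[0, π/2]`, the bound follows.
-/

open scoped ComplexConjugate ComplexOrder

section WeightedGram

variable {ι 𝕂 : Type*} [Fintype ι] [RCLike 𝕂]

noncomputable def weightedInner (μ : ι → ℝ) (x y : ι → 𝕂) : 𝕂 :=
  ∑ i, (μ i : 𝕂) * (conj (x i) * y i)

noncomputable def weightedGram (μ : ι → ℝ) (x y : ι → 𝕂) : ℝ :=
  RCLike.re (weightedInner μ x x) * RCLike.re (weightedInner μ y y) - ‖weightedInner μ x y‖ ^ 2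

theorem re_weightedInner_self (μ : ι → ℝ) (x : ι → 𝕂) :
    RCLike.re (weightedInner μ x x) = ∑ i, μ i * ‖x i‖ ^ 2 := by
  simp only [weightedInner, map_sum, RCLike.conj_mul, ← RCLike.ofReal_pow, ← RCLike.ofReal_mul,
    RCLike.ofReal_re]

theorem ofReal_re_weightedInner_self (μ : ι → ℝ) (x : ι → 𝕂) :
    (RCLike.re (weightedInner μ x x) : 𝕂) = weightedInner μ x x := by
  rw [← RCLike.conj_eq_iff_re]
  simp only [weightedInner, map_sum, map_mul, RCLike.conj_ofReal, RCLike.conj_conj, mul_comm (x _)]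

/-- Lagrange's identity. -/
theorem weightedGram_eq (μ : ι → ℝ) (x y : ι → 𝕂) :
    weightedGram μ x y = 2⁻¹ * ∑ i, ∑ j, μ i * μ j * ‖x i * y j - x j * y i‖ ^ 2 := by
  set f : ι → ι → 𝕂 := fun i j ↦ μ i * μ j *
    (conj (x i) * x i * (conj (y j) * y j) - x i * conj (y i) * (conj (x j) * y j))
  have hsymm : ∀ i j, ((μ i * μ j * ‖x i * y j - x j * y i‖ ^ 2 : ℝ) : 𝕂) = f i j + f j i := by
    intro i j
    simp only [f, RCLike.ofReal_pow, ← RCLike.conj_mul, map_sub, map_mul]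
    ring
  have hdouble : ((∑ i, ∑ j, μ i * μ j * ‖x i * y j - x j * y i‖ ^ 2 : ℝ) : 𝕂)
      = 2 * ∑ i, ∑ j, f i j := by
    simp only [RCLike.ofReal_sum, hsymm, Finset.sum_add_distrib]
    rw [Finset.sum_comm (f := fun i j ↦ f j i)]
    ring
  have hexpand : (weightedGram μ x y : 𝕂) = ∑ i, ∑ j, f i j := by
    rw [weightedGram, RCLike.ofReal_sub, RCLike.ofReal_mul, ofReal_re_weightedInner_self,
      ofReal_re_weightedInner_self, RCLike.ofReal_pow, ← RCLike.conj_mul, weightedInner,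
      weightedInner, weightedInner, Finset.sum_mul_sum, map_sum, Finset.sum_mul_sum,
      ← Finset.sum_sub_distrib]
    refine Finset.sum_congr rfl fun i _ ↦ ?_
    rw [← Finset.sum_sub_distrib]
    refine Finset.sum_congr rfl fun j _ ↦ ?_
    simp only [f, map_mul, RCLike.conj_ofReal, RCLike.conj_conj]
    ring
  apply RCLike.ofReal_injective (K := 𝕂)
  rw [hexpand, RCLike.ofReal_mul, hdouble]
  push_cast
  ring

theorem weightedGram_le {μ : ι → ℝ} {M : ℝ} (hM : ∀ i j, i ≠ j → μ i * μ j ≤ M) (x y : ι → 𝕂) :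
    weightedGram μ x y ≤ M * weightedGram 1 x y := by
  rw [weightedGram_eq, weightedGram_eq, mul_left_comm]
  refine mul_le_mul_of_nonneg_left ?_ (by norm_num)
  rw [Finset.mul_sum]
  refine Finset.sum_le_sum fun i _ ↦ ?_
  rw [Finset.mul_sum]
  refine Finset.sum_le_sum fun j _ ↦ ?_
  rcases eq_or_ne i j with rfl | hij
  · simp
  · simpa using mul_le_mul_of_nonneg_right (hM i j hij) (sq_nonneg ‖x i * y j - x j * y i‖)

end WeightedGram

noncomputable def gramDet (𝕂 : Type*) {E : Type*} [RCLike 𝕂] [NormedAddCommGroup E]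
    [InnerProductSpace 𝕂 E] (u w : E) : ℝ :=
  ‖u‖ ^ 2 * ‖w‖ ^ 2 - ‖inner 𝕂 u w‖ ^ 2

theorem gramDet_eq_weightedGram {ι 𝕂 E : Type*} [Fintype ι] [RCLike 𝕂] [NormedAddCommGroup E]
    [InnerProductSpace 𝕂 E] {μ : ι → ℝ} {u w : E} {x y : ι → 𝕂}
    (hu : inner 𝕂 u u = weightedInner μ x x) (hw : inner 𝕂 w w = weightedInner μ y y)
    (huw : inner 𝕂 u w = weightedInner μ x y) :
    gramDet 𝕂 u w = weightedGram μ x y := by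
  rw [gramDet, weightedGram, ← hu, ← hw, ← huw, inner_self_eq_norm_sq, inner_self_eq_norm_sq]

section FubiniStudy

variable {𝕂 : Type*} [RCLike 𝕂] {d : ℕ}

theorem sin_dProj {u w : EuclideanSpace 𝕂 (Fin d)} (hu : u ≠ 0) (hw : w ≠ 0) :
    Real.sin (dProj u w) = √(gramDet 𝕂 u w) / (‖u‖ * ‖w‖) := by
  have hpos : 0 < ‖u‖ * ‖w‖ := by positivity
  have h : 1 - (‖inner 𝕂 u w‖ / (‖u‖ * ‖w‖)) ^ 2 = gramDet 𝕂 u w / (‖u‖ * ‖w‖) ^ 2 := by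
    rw [gramDet]
    field_simp
  rw [dProj, Real.sin_arccos, h, Real.sqrt_div' _ (sq_nonneg _), Real.sqrt_sq hpos.le]

theorem two_div_pi_mul_dProj_le_sin (u w : EuclideanSpace 𝕂 (Fin d)) :
    2 / Real.pi * dProj u w ≤ Real.sin (dProj u w) :=
  Real.mul_le_sin (Real.arccos_nonneg _) (Real.arccos_le_pi_div_two.mpr (by positivity))

theorem dProj_ge_of_gramDet_le {u₁ u₂ w₁ w₂ : EuclideanSpace 𝕂 (Fin d)} {c R : ℝ}
    (hu₁ : ‖u₁‖ = 1) (hu₂ : ‖u₂‖ = 1) (hw₁ : w₁ ≠ 0) (hw₂ : w₂ ≠ 0) (hc : 0 ≤ c)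
    (hR : ‖w₁‖ * ‖w₂‖ ≤ R) (hgram : c ^ 2 * gramDet 𝕂 u₁ u₂ ≤ gramDet 𝕂 w₁ w₂) :
    2 / Real.pi * (c / R) * dProj u₁ u₂ ≤ dProj w₁ w₂ := by
  have hw : 0 < ‖w₁‖ * ‖w₂‖ := by positivity
  have hu₁₀ : u₁ ≠ 0 := ne_zero_of_norm_ne_zero (hu₁ ▸ one_ne_zero)
  have hu₂₀ : u₂ ≠ 0 := ne_zero_of_norm_ne_zero (hu₂ ▸ one_ne_zero)
  calc 2 / Real.pi * (c / R) * dProj u₁ u₂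
      = c * (2 / Real.pi * dProj u₁ u₂) / R := by ring
    _ ≤ c * √(gramDet 𝕂 u₁ u₂) / R := by
      refine div_le_div_of_nonneg_right (mul_le_mul_of_nonneg_left ?_ hc) (hw.le.trans hR)
      simpa [sin_dProj hu₁₀ hu₂₀, hu₁, hu₂] using two_div_pi_mul_dProj_le_sin u₁ u₂
    _ = √(c ^ 2 * gramDet 𝕂 u₁ u₂) / R := by
      rw [Real.sqrt_mul (sq_nonneg c), Real.sqrt_sq hc]
    _ ≤ √(gramDet 𝕂 w₁ w₂) / (‖w₁‖ * ‖w₂‖) := by gcongr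
    _ = Real.sin (dProj w₁ w₂) := (sin_dProj hw₁ hw₂).symm
    _ ≤ dProj w₁ w₂ := Real.sin_le (Real.arccos_nonneg _)

end FubiniStudy

section SingularCoordinates

open Matrix

variable {n 𝕂 : Type*} [Fintype n] [DecidableEq n] [RCLike 𝕂] (g : Matrix n n 𝕂)

theorem toEuclideanLin_injective (hg : IsUnit g) : Function.Injective (toEuclideanLin g) :=
  fun _ _ h ↦ WithLp.ofLp_injective 2 (mulVec_injective_iff_isUnit.mpr hg congr(WithLp.ofLp $h))

theorem eigenvalues_mul_conjTranspose_self_pos (hg : IsUnit g) (i : n) :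
    0 < (isHermitian_mul_conjTranspose_self g).eigenvalues i :=
  (PosDef.mul_conjTranspose_self g (vecMul_injective_iff_isUnit.mpr hg)).eigenvalues_pos i

theorem toEuclideanLin_conjTranspose_eigenvectorBasis (i : n) :
    toEuclideanLin g (toEuclideanLin gᴴ ((isHermitian_mul_conjTranspose_self g).eigenvectorBasis i))
      = ((isHermitian_mul_conjTranspose_self g).eigenvalues i : 𝕂) •
          (isHermitian_mul_conjTranspose_self g).eigenvectorBasis i := by
  rw [← LinearMap.comp_apply, ← toLpLin_mul_same]
  ext j
  simp only [toLpLin_apply, IsHermitian.mulVec_eigenvectorBasis, WithLp.ofLp_smul,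
    RCLike.real_smul_eq_coe_smul (K := 𝕂)]

noncomputable def singularCoord (v : EuclideanSpace 𝕂 n) (i : n) : 𝕂 :=
  inner 𝕂 ((isHermitian_mul_conjTranspose_self g).eigenvectorBasis i) (toEuclideanLin g v)

theorem inner_toEuclideanLin_eq_weightedInner (v w : EuclideanSpace 𝕂 n) :
    inner 𝕂 (toEuclideanLin g v) (toEuclideanLin g w)
      = weightedInner 1 (singularCoord g v) (singularCoord g w) := by
  rw [← (isHermitian_mul_conjTranspose_self g).eigenvectorBasis.sum_inner_mul_inner]
  simp [weightedInner, singularCoord]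

theorem inner_eq_weightedInner (hg : IsUnit g) (v w : EuclideanSpace 𝕂 n) :
    inner 𝕂 v w = weightedInner (fun i ↦ ((isHermitian_mul_conjTranspose_self g).eigenvalues i)⁻¹)
      (singularCoord g v) (singularCoord g w) := by
  have hw : w = ∑ i, (((isHermitian_mul_conjTranspose_self g).eigenvalues i : 𝕂)⁻¹ *
      singularCoord g w i) •
        toEuclideanLin gᴴ ((isHermitian_mul_conjTranspose_self g).eigenvectorBasis i) := by
    apply toEuclideanLin_injective g hg
    simp only [map_sum, map_smul, toEuclideanLin_conjTranspose_eigenvectorBasis, smul_smul]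
    conv_lhs =>
      rw [← (isHermitian_mul_conjTranspose_self g).eigenvectorBasis.sum_repr' (toEuclideanLin g w)]
    refine Finset.sum_congr rfl fun i _ ↦ ?_
    have hev : ((isHermitian_mul_conjTranspose_self g).eigenvalues i : 𝕂) ≠ 0 :=
      RCLike.ofReal_ne_zero.mpr (eigenvalues_mul_conjTranspose_self_pos g hg i).ne'
    rw [mul_comm, ← mul_assoc, mul_inv_cancel₀ hev, one_mul, singularCoord]
  conv_lhs => rw [hw]
  simp only [inner_sum, inner_smul_right, toEuclideanLin_conjTranspose_eq_adjoint,
    LinearMap.adjoint_inner_right, weightedInner, singularCoord,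
    ← inner_conj_symm (toEuclideanLin g v)]
  refine Finset.sum_congr rfl fun i _ ↦ ?_
  push_cast
  ring

theorem norm_toEuclideanLin_le (hg : IsUnit g) {s : ℝ} (hs : 0 ≤ s)
    (hev : ∀ i, (isHermitian_mul_conjTranspose_self g).eigenvalues i ≤ s ^ 2)
    (v : EuclideanSpace 𝕂 n) : ‖toEuclideanLin g v‖ ≤ s * ‖v‖ := by
  refine le_of_pow_le_pow_left₀ two_ne_zero (by positivity) ?_
  rw [mul_pow, ← inner_self_eq_norm_sq (𝕜 := 𝕂), ← inner_self_eq_norm_sq (𝕜 := 𝕂),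
    inner_toEuclideanLin_eq_weightedInner, inner_eq_weightedInner g hg, re_weightedInner_self,
    re_weightedInner_self, Finset.mul_sum]
  refine Finset.sum_le_sum fun i _ ↦ ?_
  rw [← mul_assoc, Pi.one_apply]
  gcongr
  rw [le_mul_inv_iff₀ (eigenvalues_mul_conjTranspose_self_pos g hg i), one_mul]
  exact hev i

theorem mul_gramDet_le_gramDet_toEuclideanLin (hg : IsUnit g) {m : ℝ} (hm : 0 < m)
    (hev : ∀ i j, i ≠ j → m ≤ (isHermitian_mul_conjTranspose_self g).eigenvalues i *
      (isHermitian_mul_conjTranspose_self g).eigenvalues j)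
    (v w : EuclideanSpace 𝕂 n) :
    m * gramDet 𝕂 v w ≤ gramDet 𝕂 (toEuclideanLin g v) (toEuclideanLin g w) := by
  rw [gramDet_eq_weightedGram (inner_eq_weightedInner g hg v v) (inner_eq_weightedInner g hg w w)
      (inner_eq_weightedInner g hg v w),
    gramDet_eq_weightedGram (inner_toEuclideanLin_eq_weightedInner g v v)
      (inner_toEuclideanLin_eq_weightedInner g w w) (inner_toEuclideanLin_eq_weightedInner g v w),
    ← le_inv_mul_iff₀ hm]
  refine weightedGram_le (fun i j hij ↦ ?_) _ _
  rw [← mul_inv]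
  exact inv_anti₀ hm (hev i j hij)

end SingularCoordinates

theorem Antitone.mul_last_two_le_mul_of_ne {d : ℕ} (hd : 2 ≤ d) {σ : Fin d → ℝ}
    (hσ : Antitone σ) (h0 : ∀ i, 0 ≤ σ i) {a b : Fin d} (hab : a ≠ b) :
    σ ⟨d - 1, Nat.sub_one_lt_of_lt hd⟩ * σ ⟨d - 2, Nat.sub_lt (two_pos.trans_le hd) two_pos⟩ ≤
      σ a * σ b := by
  wlog hlt : a < b generalizing a b
  · rw [mul_comm (σ a)]
    exact this hab.symm (lt_of_le_of_ne (not_lt.mp hlt) hab.symm)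
  rw [Fin.lt_def] at hlt
  rw [mul_comm (σ a)]
  exact mul_le_mul (hσ (Fin.le_def.mpr (by dsimp only; omega)))
    (hσ (Fin.le_def.mpr (by dsimp only; omega))) (h0 _) (h0 _)

namespace IsSingValues

variable {𝕂 : Type*} [RCLike 𝕂] {d : ℕ} {g : Matrix (Fin d) (Fin d) 𝕂} {σ : Fin d → ℝ}

theorem pos (hσ : IsSingValues g σ) (hg : IsUnit g) (i : Fin d) : 0 < σ i := by
  obtain ⟨-, e, he⟩ := hσ
  rw [he]
  exact Real.sqrt_pos.mpr (eigenvalues_mul_conjTranspose_self_pos g hg _)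

theorem exists_perm_eigenvalues_eq_sq (hσ : IsSingValues g σ) :
    ∃ e : Equiv.Perm (Fin d), ∀ i,
      (Matrix.isHermitian_mul_conjTranspose_self g).eigenvalues i = σ (e i) ^ 2 := by
  obtain ⟨-, e, he⟩ := hσ
  refine ⟨e.symm, fun i ↦ ?_⟩
  rw [he, Equiv.apply_symm_apply,
    Real.sq_sqrt (Matrix.eigenvalues_self_mul_conjTranspose_nonneg g i)]

theorem eigenvalues_le (hσ : IsSingValues g σ) (hg : IsUnit g) (i : Fin d) :
    (Matrix.isHermitian_mul_conjTranspose_self g).eigenvalues i ≤ σ ⟨0, i.pos⟩ ^ 2 := by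
  obtain ⟨e, he⟩ := hσ.exists_perm_eigenvalues_eq_sq
  rw [he]
  exact pow_le_pow_left₀ (hσ.pos hg _).le (hσ.1 (Fin.le_def.mpr (Nat.zero_le _))) 2

theorem sq_mul_le_eigenvalues_mul (hσ : IsSingValues g σ) (hg : IsUnit g) (hd : 2 ≤ d)
    {i j : Fin d} (hij : i ≠ j) :
    (σ ⟨d - 1, Nat.sub_one_lt_of_lt hd⟩ *
        σ ⟨d - 2, Nat.sub_lt (two_pos.trans_le hd) two_pos⟩) ^ 2 ≤
      (Matrix.isHermitian_mul_conjTranspose_self g).eigenvalues i *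
        (Matrix.isHermitian_mul_conjTranspose_self g).eigenvalues j := by
  obtain ⟨e, he⟩ := hσ.exists_perm_eigenvalues_eq_sq
  rw [he, he, ← mul_pow]
  have h0 : ∀ k, 0 ≤ σ k := fun k ↦ (hσ.pos hg k).le
  exact pow_le_pow_left₀ (mul_nonneg (h0 _) (h0 _))
    (hσ.1.mul_last_two_le_mul_of_ne hd h0 (e.injective.ne hij)) 2

end IsSingValues

/-- For `g ∈ GL_d(𝕂)` and unit vectors `v₁, v₂`,
`d_ℙ([gv₁],[gv₂]) ≥ (2/π)·(σ_d(g)σ_{d−1}(g)/σ₁(g)²)·d_ℙ([v₁],[v₂])`. -/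
theorem fubiniStudy_lower_bound {𝕂 : Type*} [RCLike 𝕂] {d : ℕ} (hd : 2 ≤ d)
    (g : Matrix (Fin d) (Fin d) 𝕂) (hg : IsUnit g)
    (σ : Fin d → ℝ) (hσ : IsSingValues g σ)
    (v₁ v₂ : EuclideanSpace 𝕂 (Fin d)) (h1 : ‖v₁‖ = 1) (h2 : ‖v₂‖ = 1) :
    dProj (Matrix.toEuclideanLin g v₁) (Matrix.toEuclideanLin g v₂) ≥
      (2 / Real.pi) * (σ ⟨d - 1, by omega⟩ * σ ⟨d - 2, by omega⟩ / (σ ⟨0, by omega⟩) ^ 2) *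
        dProj v₁ v₂ := by
  have hne : ∀ v : EuclideanSpace 𝕂 (Fin d), ‖v‖ = 1 → Matrix.toEuclideanLin g v ≠ 0 :=
    fun v hv ↦ (map_ne_zero_iff _ (toEuclideanLin_injective g hg)).mpr
      (ne_zero_of_norm_ne_zero (hv ▸ one_ne_zero))
  have hle : ∀ v : EuclideanSpace 𝕂 (Fin d), ‖v‖ = 1 →
      ‖Matrix.toEuclideanLin g v‖ ≤ σ ⟨0, by omega⟩ := fun v hv ↦ by
    simpa [hv] using norm_toEuclideanLin_le g hg (hσ.pos hg _).le (hσ.eigenvalues_le hg) v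
  refine dProj_ge_of_gramDet_le h1 h2 (hne v₁ h1) (hne v₂ h2)
    (mul_nonneg (hσ.pos hg _).le (hσ.pos hg _).le) ?_ ?_
  · rw [sq]
    exact mul_le_mul (hle v₁ h1) (hle v₂ h2) (norm_nonneg _) (hσ.pos hg _).le
  · exact mul_gramDet_le_gramDet_toEuclideanLin g hg
      (pow_pos (mul_pos (hσ.pos hg _) (hσ.pos hg _)) 2)
      (fun i j hij ↦ hσ.sq_mul_le_eigenvalues_mul hg hd hij) v₁ v₂
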